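/- Let (X,Y) be a binary source pair, N = 2^n, (X^N, Y^N) be N i.i.d. copies, U^N = X^N G_N, and let E ⊆ {1,…,N}. Consider the successive-cancellation decoder that is given (U_i)_{i∈E} and Y^N, and for i ∉ E estimates U_i by the maximum-likelihood rule based on (Y^N, Û^{i−1}). Then the block error probability satisfies Pr(Û^N ≠ U^N) ≤ Σ_{i∉E} Z(U_i | Y^N, U^{i−1}). -/

import Mathlib

open Matrix

/-- The kernel `F₂ = [[1,0],[1,1]]` over GF(2). -/
def F2kernel : Matrix (Fin 2) (Fin 2) (ZMod 2) := !![1, 0; 1, 1]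

/-- `n`-th Kronecker power of `F₂`, indexed by bit strings. -/
def kronPow (n : ℕ) : Matrix (Fin n → Fin 2) (Fin n → Fin 2) (ZMod 2) :=
  Matrix.of fun i j => ∏ k : Fin n, F2kernel (i k) (j k)

/-- Bit-reversal permutation matrix `B_N`. -/
def bitRev (n : ℕ) : Matrix (Fin n → Fin 2) (Fin n → Fin 2) (ZMod 2) :=
  Matrix.of fun i j => if i = j ∘ Fin.rev then 1 else 0

/-- The polar transform `G_N = F₂^{⊗n} B_N`; it satisfies `G_N⁻¹ = G_N`. -/
def polarG (n : ℕ) : Matrix (Fin n → Fin 2) (Fin n → Fin 2) (ZMod 2) :=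
  kronPow n * bitRev n

/-- The natural (MSB-first) numbering of the index set `{1,…,N}`,
`N = 2^n`, by bit strings. -/
def ord {n : ℕ} (i : Fin n → Fin 2) : ℕ :=
  ∑ k : Fin n, (i k).val * 2 ^ (n - 1 - k.val)

/-- Joint pmf of `(U^N, Y^N)` where `(X^N, Y^N)` are `N` i.i.d. copies of the
source `p` and `U^N = X^N G_N` (equivalently `X^N = U^N G_N`). -/
noncomputable def pU {n : ℕ} (p : ZMod 2 → ℕ → ℝ)
    (u : (Fin n → Fin 2) → ZMod 2) (y : (Fin n → Fin 2) → ℕ) : ℝ :=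
  ∏ i : Fin n → Fin 2, p (Matrix.vecMul u (polarG n) i) (y i)

/-- Unnormalized probability `Pr(U_i = a, U^{i-1} = v^{i-1}, Y^N = y)`. -/
noncomputable def jointRestr {n : ℕ} (p : ZMod 2 → ℕ → ℝ)
    (y : (Fin n → Fin 2) → ℕ) (i : Fin n → Fin 2)
    (v : (Fin n → Fin 2) → ZMod 2) (a : ZMod 2) : ℝ :=
  ∑ u : (Fin n → Fin 2) → ZMod 2,
    if u i = a ∧ ∀ j, ord j < ord i → u j = v j then pU p u y else 0

/-- The successive-cancellation decoder: given `y` and the bits `u_i`, `i ∈ E`,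
it reproduces `u_i` for `i ∈ E` and otherwise takes a maximum-likelihood
decision for `U_i` given `Y^N = y` and the previous estimates. -/
noncomputable def dec {n : ℕ} (p : ZMod 2 → ℕ → ℝ) (E : Finset (Fin n → Fin 2))
    (y : (Fin n → Fin 2) → ℕ) (u : (Fin n → Fin 2) → ZMod 2) :
    (Fin n → Fin 2) → ZMod 2 := fun i =>
  if i ∈ E then u i
  else
    if jointRestr p y i (fun j => if h : ord j < ord i then dec p E y u j else 0) 1 ≤
        jointRestr p y i (fun j => if h : ord j < ord i then dec p E y u j else 0) 0
    then 0 else 1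
termination_by i => ord i
decreasing_by all_goals exact h

/-- Conditional Bhattacharyya parameter `Z(U_i | Y^N, U^{i-1})`. -/
noncomputable def Zi {n : ℕ} (p : ZMod 2 → ℕ → ℝ) (i : Fin n → Fin 2) : ℝ :=
  2 * ∑' w : ((Fin n → Fin 2) → ℕ) × ({j : Fin n → Fin 2 // ord j < ord i} → ZMod 2),
    Real.sqrt
      ((∑ u : (Fin n → Fin 2) → ZMod 2,
        if u i = 0 ∧ ∀ j : {j // ord j < ord i}, u j.1 = w.2 j then pU p u w.1 else 0) *
       (∑ u : (Fin n → Fin 2) → ZMod 2,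
        if u i = 1 ∧ ∀ j : {j // ord j < ord i}, u j.1 = w.2 j then pU p u w.1 else 0))

/-! If successive cancellation errs, let `i` be the first wrong position; `i ∉ E`, and the
decoder has seen the true past `U^{i-1}`, so its maximum-likelihood decision for `U_i` fails on
the true word. For fixed `y` and past `w`, the words on which this happens have total mass
at most `Σ_a [P(w,a) ≤ P(w,a+1)] P(w,a) ≤ 2 √(P(w,0) P(w,1))` (the Bhattacharyya bound); summing
over `w` and `y` gives `Z(U_i | Y^N, U^{i-1})`, and a union bound over `i` finishes. -/

open Finset

theorem Summable.fin_prod_apply {β : Type*} {m : ℕ} {q : Fin m → β → ℝ}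
    (h0 : ∀ i b, 0 ≤ q i b) (hq : ∀ i, Summable (q i)) :
    Summable fun y : Fin m → β => ∏ i, q i (y i) := by
  induction m with
  | zero => exact Summable.of_finite
  | succ m ih =>
    have hpair := (hq 0).mul_of_nonneg (ih (fun i => h0 i.succ) fun i => hq i.succ) (h0 0)
      fun y => prod_nonneg fun i _ => h0 i.succ (y i)
    refine (Fin.consEquiv fun _ => β).summable_iff.mp ?_
    convert hpair using 2 with x
    simp [Fin.prod_univ_succ]

theorem Summable.fintype_prod_apply {ι β : Type*} [Fintype ι] {q : ι → β → ℝ}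
    (h0 : ∀ i b, 0 ≤ q i b) (hq : ∀ i, Summable (q i)) :
    Summable fun y : ι → β => ∏ i, q i (y i) := by
  let e := Fintype.equivFin ι
  refine (e.arrowCongr (Equiv.refl β)).symm.summable_iff.mp ?_
  convert Summable.fin_prod_apply (q := fun j => q (e.symm j)) (fun j => h0 _) (fun j => hq _)
    using 2 with y
  rw [← e.prod_comp]
  simp

theorem Summable.comp_fst_of_nonneg {β γ : Type*} [Finite γ] {f : β → ℝ} (hf : Summable f)
    (h0 : 0 ≤ f) : Summable fun x : β × γ => f x.1 := by
  simpa using hf.mul_of_nonneg (Summable.of_finite (f := fun _ : γ => (1 : ℝ))) h0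
    fun _ => zero_le_one

theorem ite_le_sqrt_mul {a b : ℝ} (ha : 0 ≤ a) : (if a ≤ b then a else 0) ≤ √(a * b) := by
  split_ifs with h
  · calc a = √(a * a) := (Real.sqrt_mul_self ha).symm
      _ ≤ √(a * b) := Real.sqrt_le_sqrt (mul_le_mul_of_nonneg_left h ha)
  · exact Real.sqrt_nonneg _

theorem ZMod.le_apply_add_one_of_ite_ne {m : ZMod 2 → ℝ} {b : ZMod 2}
    (h : (if m 1 ≤ m 0 then 0 else 1) ≠ b) : m b ≤ m (b + 1) := by
  obtain rfl | rfl : b = 0 ∨ b = 1 := by clear h; revert b; decide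
  · split_ifs at h with hm
    · exact absurd rfl h
    · exact (not_le.mp hm).le
  · split_ifs at h with hm
    · exact hm
    · exact absurd rfl h

theorem Function.exists_ne_forall_lt_imp_eq {ι α : Type*} (r : ι → ℕ) {f g : ι → α}
    (h : f ≠ g) : ∃ i, f i ≠ g i ∧ ∀ j, r j < r i → f j = g j := by
  obtain ⟨i, hi, hmin⟩ := (InvImage.wf r wellFounded_lt).has_min {i | f i ≠ g i}
    (Function.ne_iff.mp h)
  exact ⟨i, hi, fun j hj => by_contra fun hne => hmin j hne hj⟩

theorem Finset.sum_ite_le_sum_sum_ite {α ι : Type*} [Fintype α] (s : Finset ι) {μ : α → ℝ}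
    (hμ : ∀ u, 0 ≤ μ u) {A : α → Prop} {B : ι → α → Prop} [DecidablePred A]
    [∀ i, DecidablePred (B i)] (h : ∀ u, A u → ∃ i ∈ s, B i u) :
    (∑ u, if A u then μ u else 0) ≤ ∑ i ∈ s, ∑ u, if B i u then μ u else 0 := by
  rw [sum_comm]
  refine sum_le_sum fun u _ => ?_
  have hB : ∀ i ∈ s, 0 ≤ if B i u then μ u else 0 := fun i _ => by split_ifs <;> simp [hμ u]
  split_ifs with hA
  · obtain ⟨i, hi, hBi⟩ := h u hA
    exact (if_pos hBi).symm.le.trans (single_le_sum hB hi)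
  · exact sum_nonneg hB

section Bhattacharyya

variable {α K : Type*} [Fintype α] [DecidableEq K]

/-- `Pr(B = a, F = k)` for the random pair `(F, B) = (f u, b u)` under the weights `μ`. -/
noncomputable def fiberMass (μ : α → ℝ) (f : α → K) (b : α → ZMod 2) (k : K) (a : ZMod 2) : ℝ :=
  ∑ u, if b u = a ∧ f u = k then μ u else 0

variable {μ : α → ℝ} {f : α → K} {b : α → ZMod 2}

theorem fiberMass_nonneg (hμ : ∀ u, 0 ≤ μ u) (k : K) (a : ZMod 2) : 0 ≤ fiberMass μ f b k a :=
  sum_nonneg fun u _ => by split_ifs <;> simp [hμ u]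

theorem fiberMass_le_sum (hμ : ∀ u, 0 ≤ μ u) (k : K) (a : ZMod 2) :
    fiberMass μ f b k a ≤ ∑ u, μ u :=
  sum_le_sum fun u _ => by split_ifs <;> simp [hμ u]

theorem sum_ite_fiberMass_eq [Fintype K] (c : K → ZMod 2 → Prop) [∀ k a, Decidable (c k a)] :
    (∑ u, if c (f u) (b u) then μ u else 0) =
      ∑ k, ∑ a, if c k a then fiberMass μ f b k a else 0 := by
  rw [← Fintype.sum_prod_type', ← sum_fiberwise univ (fun u => (f u, b u))]
  refine sum_congr rfl fun ⟨k, a⟩ _ => ?_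
  rw [fiberMass, ite_sum_zero, sum_filter]
  refine sum_congr rfl fun u _ => ?_
  by_cases h : b u = a ∧ f u = k
  · obtain ⟨rfl, rfl⟩ := h
    simp
  · have : (f u, b u) ≠ (k, a) := fun h' => h ⟨congrArg Prod.snd h', congrArg Prod.fst h'⟩
    simp [this, h]

/-- The Bhattacharyya bound for a maximum-likelihood guess of `B` from `F`. -/
theorem sum_ite_fiberMass_le_sum_sqrt [Fintype K] (hμ : ∀ u, 0 ≤ μ u) :
    (∑ u, if fiberMass μ f b (f u) (b u) ≤ fiberMass μ f b (f u) (b u + 1) then μ u else 0) ≤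
      ∑ k, 2 * √(fiberMass μ f b k 0 * fiberMass μ f b k 1) := by
  rw [sum_ite_fiberMass_eq (fun k a => fiberMass μ f b k a ≤ fiberMass μ f b k (a + 1))]
  refine sum_le_sum fun k _ => ?_
  have h0 := ite_le_sqrt_mul (b := fiberMass μ f b k 1) (fiberMass_nonneg (f := f) (b := b) hμ k 0)
  have h1 := ite_le_sqrt_mul (b := fiberMass μ f b k 0) (fiberMass_nonneg (f := f) (b := b) hμ k 1)
  rw [mul_comm] at h1
  have hsum_two : ∀ g : ZMod 2 → ℝ, ∑ a, g a = g 0 + g 1 := Fin.sum_univ_two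
  rw [hsum_two]
  simp only [zero_add, show (1 + 1 : ZMod 2) = 0 from rfl]
  linarith

end Bhattacharyya

section PolarDecoding

variable {n : ℕ} {p : ZMod 2 → ℕ → ℝ}

theorem pU_nonneg (hp : ∀ x y, 0 ≤ p x y) (u : (Fin n → Fin 2) → ZMod 2)
    (y : (Fin n → Fin 2) → ℕ) : 0 ≤ pU p u y :=
  prod_nonneg fun _ _ => hp _ _

theorem summable_pU (hp : ∀ x y, 0 ≤ p x y) (hs : Summable fun z : ZMod 2 × ℕ => p z.1 z.2)
    (u : (Fin n → Fin 2) → ZMod 2) : Summable (pU p u) :=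
  Summable.fintype_prod_apply (fun _ _ => hp _ _) fun _ => hs.prod_factor _

/-- The past `U^{i-1}` of a word, indexed by the bit strings preceding `i`. -/
def prefixBits (i : Fin n → Fin 2) (v : (Fin n → Fin 2) → ZMod 2) :
    {j : Fin n → Fin 2 // ord j < ord i} → ZMod 2 :=
  fun j => v j

/-- `Pr(U_i = a, U^{i-1} = w, Y^N = y)`. -/
noncomputable def prefixMass (p : ZMod 2 → ℕ → ℝ) (y : (Fin n → Fin 2) → ℕ)
    (i : Fin n → Fin 2) : ({j : Fin n → Fin 2 // ord j < ord i} → ZMod 2) → ZMod 2 → ℝ :=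
  fiberMass (pU p · y) (prefixBits i) (· i)

theorem Zi_eq_tsum (i : Fin n → Fin 2) :
    Zi p i = 2 * ∑' x : ((Fin n → Fin 2) → ℕ) × ({j : Fin n → Fin 2 // ord j < ord i} → ZMod 2),
      √(prefixMass p x.1 i x.2 0 * prefixMass p x.1 i x.2 1) := by
  simp only [Zi, prefixMass, fiberMass, prefixBits, funext_iff]

theorem jointRestr_eq_prefixMass (y : (Fin n → Fin 2) → ℕ) (i : Fin n → Fin 2)
    (v : (Fin n → Fin 2) → ZMod 2) (a : ZMod 2) :
    jointRestr p y i v a = prefixMass p y i (prefixBits i v) a := by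
  simp only [jointRestr, prefixMass, fiberMass, prefixBits, funext_iff, Subtype.forall]

variable {E : Finset (Fin n → Fin 2)} {y : (Fin n → Fin 2) → ℕ} {u : (Fin n → Fin 2) → ZMod 2}
  {i : Fin n → Fin 2}

theorem dec_of_mem (hi : i ∈ E) : dec p E y u i = u i := by
  rw [dec, if_pos hi]

theorem dec_of_not_mem (hi : i ∉ E) :
    dec p E y u i =
      if prefixMass p y i (prefixBits i (dec p E y u)) 1 ≤
          prefixMass p y i (prefixBits i (dec p E y u)) 0
      then 0 else 1 := by
  have hpast : prefixBits i (fun j => if _h : ord j < ord i then dec p E y u j else 0) =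
      prefixBits i (dec p E y u) :=
    funext fun j => dif_pos j.2
  rw [dec, if_neg hi, jointRestr_eq_prefixMass, jointRestr_eq_prefixMass, hpast]

theorem exists_prefixMass_le_of_dec_ne (h : dec p E y u ≠ u) :
    ∃ i ∈ univ \ E,
      prefixMass p y i (prefixBits i u) (u i) ≤ prefixMass p y i (prefixBits i u) (u i + 1) := by
  obtain ⟨i, hne, hpast⟩ := Function.exists_ne_forall_lt_imp_eq ord h
  have hiE : i ∉ E := fun hi => hne (dec_of_mem hi)
  have hbits : prefixBits i (dec p E y u) = prefixBits i u := funext fun j => hpast j j.2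
  refine ⟨i, mem_sdiff.2 ⟨mem_univ i, hiE⟩, ZMod.le_apply_add_one_of_ite_ne ?_⟩
  simpa only [dec_of_not_mem hiE, hbits] using hne

variable (E) in
theorem sum_dec_ne_le (hp : ∀ x y, 0 ≤ p x y) (y : (Fin n → Fin 2) → ℕ) :
    (∑ u, if dec p E y u ≠ u then pU p u y else 0) ≤
      ∑ i ∈ univ \ E, ∑ w, 2 * √(prefixMass p y i w 0 * prefixMass p y i w 1) :=
  (sum_ite_le_sum_sum_ite _ (pU_nonneg hp · y) fun _ => exists_prefixMass_le_of_dec_ne).trans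
    (sum_le_sum fun _ _ => sum_ite_fiberMass_le_sum_sqrt (pU_nonneg hp · y))

theorem summable_sqrt_prefixMass (hp : ∀ x y, 0 ≤ p x y)
    (hs : Summable fun z : ZMod 2 × ℕ => p z.1 z.2) (i : Fin n → Fin 2) :
    Summable fun x : ((Fin n → Fin 2) → ℕ) × ({j : Fin n → Fin 2 // ord j < ord i} → ZMod 2) =>
      √(prefixMass p x.1 i x.2 0 * prefixMass p x.1 i x.2 1) := by
  have hS : ∀ y : (Fin n → Fin 2) → ℕ, 0 ≤ ∑ u, pU p u y :=
    fun y => sum_nonneg fun u _ => pU_nonneg hp u y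
  refine .of_nonneg_of_le (fun _ => Real.sqrt_nonneg _) (fun x => ?_)
    ((summable_sum fun u _ => summable_pU hp hs u).comp_fst_of_nonneg hS)
  have hM := fun a => fiberMass_le_sum (f := prefixBits i) (b := (· i)) (pU_nonneg hp · x.1) x.2 a
  calc √(prefixMass p x.1 i x.2 0 * prefixMass p x.1 i x.2 1)
      ≤ √((∑ u, pU p u x.1) * ∑ u, pU p u x.1) :=
        Real.sqrt_le_sqrt (mul_le_mul (hM 0) (hM 1) (fiberMass_nonneg (pU_nonneg hp · x.1) _ _)
          (hS x.1))
    _ = ∑ u, pU p u x.1 := Real.sqrt_mul_self (hS x.1)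

theorem hasSum_Zi (hp : ∀ x y, 0 ≤ p x y) (hs : Summable fun z : ZMod 2 × ℕ => p z.1 z.2)
    (i : Fin n → Fin 2) :
    HasSum (fun y => ∑ w, 2 * √(prefixMass p y i w 0 * prefixMass p y i w 1)) (Zi p i) := by
  rw [Zi_eq_tsum, ← tsum_mul_left]
  exact ((summable_sqrt_prefixMass hp hs i).mul_left 2).hasSum.prod_fiberwise
    fun y => hasSum_fintype _

end PolarDecoding

/-- Union bound on the block error probability of successive-cancellation
decoding: `Pr(Û^N ≠ U^N) ≤ Σ_{i ∉ E} Z(U_i | Y^N, U^{i-1})`. -/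
theorem stmt14 (n : ℕ) (p : ZMod 2 → ℕ → ℝ) (hp : ∀ x y, 0 ≤ p x y)
    (hsum : HasSum (fun z : ZMod 2 × ℕ => p z.1 z.2) 1)
    (E : Finset (Fin n → Fin 2)) :
    (∑' y : (Fin n → Fin 2) → ℕ, ∑ u : (Fin n → Fin 2) → ZMod 2,
        if dec p E y u ≠ u then pU p u y else 0) ≤
      ∑ i ∈ Finset.univ \ E, Zi p i := by
  have hbound := hasSum_sum fun i (_ : i ∈ univ \ E) => hasSum_Zi hp hsum.summable i
  have herr : Summable fun y => ∑ u, if dec p E y u ≠ u then pU p u y else 0 :=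
    .of_nonneg_of_le (fun y => sum_nonneg fun u _ => by split_ifs <;> simp [pU_nonneg hp u y])
      (sum_dec_ne_le E hp) hbound.summable
  exact hasSum_le (sum_dec_ne_le E hp) herr.hasSum hbound
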